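/- Counter-variable characterization of right temporal robustness: given a boolean sequence z : [0, T'] → {0,1}, define c₁(0) = z(0), c₁(t) = (c₁(t−1)+1)·z(t); c₀(0) = −(1−z(0)), c₀(t) = (c₀(t−1)−1)·(1−z(t)). Then c₁(t) = max{k : k ≤ t+1 ∧ ∀ j ∈ [t−k+1, t], z(j) = 1} and −c₀(t) = max{k : k ≤ t+1 ∧ ∀ j ∈ [t−k+1, t], z(j) = 0}; consequently c₁(t) + c₀(t) + (1 − 2·z(t)) equals z-signed run length minus one offset, i.e., c₁(t) − z(t) + c₀(t) + (1 − z(t)) equals the temporal robustness counter used in the MILP encoding (it equals (run length of current value at t) − 1, signed by z(t)). -/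
import Mathlib

private def runLen (z : ℕ → ℕ) (v : ℕ) : ℕ → ℕ
  | 0 => if z 0 = v then 1 else 0
  | (t+1) => if z (t+1) = v then runLen z v t + 1 else 0

private theorem runLen_spec (z : ℕ → ℕ) (v : ℕ) : ∀ t,
    runLen z v t ≤ t + 1 ∧
    (∀ j ∈ Set.Icc (t + 1 - runLen z v t) t, z j = v) ∧
    (runLen z v t = t + 1 ∨ (runLen z v t ≤ t ∧ z (t - runLen z v t) ≠ v)) := by
  intro t
  induction t with
  | zero =>
    by_cases h : z 0 = v <;> simp [runLen, h]
  | succ t ih =>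
    obtain ⟨hle, hrun, hmax⟩ := ih
    by_cases h : z (t+1) = v
    · refine ⟨?_, ?_, ?_⟩
      · simp [runLen, h]; omega
      · intro j hj
        simp only [runLen, h, if_pos] at hj
        simp only [Set.mem_Icc] at hj
        rcases Nat.lt_or_ge j (t+1) with hj' | hj'
        · exact hrun j (Set.mem_Icc.2 ⟨by omega, by omega⟩)
        · have : j = t + 1 := by omega
          rw [this]; exact h
      · rcases hmax with h1 | ⟨h2, h3⟩
        · left; simp [runLen, h]; omega
        · right
          constructor
          · simp only [runLen, if_pos h]; omega
          · have : t + 1 - runLen z v (t+1) = t - runLen z v t := by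
              simp [runLen, h]
            rw [this]; exact h3
    · refine ⟨?_, ?_, ?_⟩
      · simp [runLen, h]
      · intro j hj
        simp only [runLen, if_neg h, Set.mem_Icc] at hj
        omega
      · right
        constructor
        · simp [runLen, h]
        · simpa [runLen, h] using h

private theorem runLen_sSup (z : ℕ → ℕ) (v : ℕ) (t : ℕ) :
    sSup {k : ℕ | k ≤ t + 1 ∧ ∀ j ∈ Set.Icc (t + 1 - k) t, z j = v}
      = runLen z v t := by
  obtain ⟨hle, hrun, hmax⟩ := runLen_spec z v t
  have hmem : runLen z v t ∈ {k : ℕ | k ≤ t + 1 ∧ ∀ j ∈ Set.Icc (t + 1 - k) t, z j = v} :=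
    ⟨hle, hrun⟩
  have hub : ∀ k ∈ {k : ℕ | k ≤ t + 1 ∧ ∀ j ∈ Set.Icc (t + 1 - k) t, z j = v},
      k ≤ runLen z v t := by
    rintro k ⟨hk1, hk2⟩
    by_contra hlt
    push_neg at hlt
    rcases hmax with h1 | ⟨h2, h3⟩
    · omega
    · exact h3 (hk2 (t - runLen z v t) (Set.mem_Icc.2 ⟨by omega, by omega⟩))
  exact le_antisymm (csSup_le ⟨_, hmem⟩ hub) (le_csSup ⟨_, hub⟩ hmem)

/-- Correctness of the MILP counter encoding for right temporal robustness:
c₁ counts the length of the maximal run of 1s ending at t (and is 0 when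
z t = 0), and -c₀ counts the length of the maximal run of 0s ending at t
(and c₀ is 0 when z t = 1). -/
theorem counter_encoding_correct (z : ℕ → ℕ) (hz : ∀ t, z t = 0 ∨ z t = 1)
    (c₁ c₀ : ℕ → ℤ)
    (h₁0 : c₁ 0 = (z 0 : ℤ))
    (h₁ : ∀ t, c₁ (t + 1) = (c₁ t + 1) * (z (t + 1) : ℤ))
    (h₀0 : c₀ 0 = -(1 - (z 0 : ℤ)))
    (h₀ : ∀ t, c₀ (t + 1) = (c₀ t - 1) * (1 - (z (t + 1) : ℤ))) :
    ∀ t,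
      c₁ t = (sSup {k : ℕ | k ≤ t + 1 ∧
        ∀ j ∈ Set.Icc (t + 1 - k) t, z j = 1} : ℕ) ∧
      -c₀ t = (sSup {k : ℕ | k ≤ t + 1 ∧
        ∀ j ∈ Set.Icc (t + 1 - k) t, z j = 0} : ℕ) ∧
      (z t = 1 → c₀ t = 0) ∧ (z t = 0 → c₁ t = 0) := by
  have key : ∀ t, c₁ t = (runLen z 1 t : ℤ) ∧ c₀ t = -(runLen z 0 t : ℤ) := by
    intro t
    induction t with
    | zero =>
      rcases hz 0 with h | h <;> simp [runLen, h, h₁0, h₀0]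
    | succ t ih =>
      obtain ⟨i1, i0⟩ := ih
      rcases hz (t+1) with h | h <;>
        simp [runLen, h, h₁ t, h₀ t, i1, i0] <;> push_cast <;> ring
  intro t
  obtain ⟨k1, k0⟩ := key t
  refine ⟨by rw [runLen_sSup z 1 t]; exact k1,
          by rw [runLen_sSup z 0 t]; omega, ?_, ?_⟩
  · intro h
    have : runLen z 0 t = 0 := by
      cases t <;> simp [runLen, h]
    omega
  · intro h
    have : runLen z 1 t = 0 := by
      cases t <;> simp [runLen, h]
    omega
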